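/- Let G be an m×n real matrix, C an n×n real symmetric positive definite matrix, Γ an m×m real symmetric positive definite matrix, y ∈ ℝᵐ, u₀ ∈ ℝⁿ, and set u₁ = u₀ + C G^T (G C G^T + Γ)^{-1} (y − G u₀). Then Γ^{-1/2}(y − G u₁) = Γ^{1/2}(G C G^T + Γ)^{-1}(y − G u₀), and hence ‖Γ^{-1/2}(y − G u₁)‖ ≤ ‖(G C G^T + Γ)^{-1/2} Γ^{1/2}‖² · ‖Γ^{-1/2}(y − G u₀)‖. -/

import Mathlib

/-!
Write `S = G C Gᵀ + Γ` and `r = y - G u₀`. Since `1 - G C Gᵀ S⁻¹ = Γ S⁻¹`, the update leaves the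
residual `Γ S⁻¹ r`, and whitening by `Γ^{-1/2}` turns it into `Γ^{1/2} S⁻¹ r`. With
`A = S^{-1/2} Γ^{1/2}` this is `AᵀA (Γ^{-1/2} r)`, and `‖AᵀA‖ = ‖A‖²` gives the bound.
-/

open Matrix

section

open scoped ComplexOrder

/-- The positive semidefinite square root of a positive semidefinite matrix
(the definition `Matrix.PosSemidef.sqrt` of the older Mathlib, removed since). -/
noncomputable def Matrix.PosSemidef.sqrt {n : Type*} [Fintype n] [DecidableEq n]
    {𝕜 : Type*} [RCLike 𝕜] {A : Matrix n n 𝕜} (hA : A.PosSemidef) : Matrix n n 𝕜 :=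
  hA.isHermitian.eigenvectorUnitary.1 *
    diagonal ((↑) ∘ (√·) ∘ hA.isHermitian.eigenvalues) *
    (star hA.isHermitian.eigenvectorUnitary : Matrix n n 𝕜)

end

/-- The Euclidean norm of a vector in `ℝⁿ`. -/
noncomputable def euclNorm {k : ℕ} (v : Fin k → ℝ) : ℝ :=
  ‖(WithLp.equiv 2 (Fin k → ℝ)).symm v‖

/-- The operator (spectral) norm of a matrix, induced by the Euclidean norms. -/
noncomputable def l2OpNorm {k l : ℕ} (A : Matrix (Fin k) (Fin l) ℝ) : ℝ :=
  ‖LinearMap.toContinuousLinearMap (Matrix.toEuclideanLin A)‖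

namespace Matrix.PosSemidef

open scoped ComplexOrder

variable {n 𝕜 : Type*} [Fintype n] [DecidableEq n] [RCLike 𝕜] {A : Matrix n n 𝕜}

lemma sqrt_mul_self (hA : A.PosSemidef) : hA.sqrt * hA.sqrt = A := by
  set U : Matrix n n 𝕜 := hA.isHermitian.eigenvectorUnitary.1
  set D : Matrix n n 𝕜 := diagonal ((↑) ∘ (√·) ∘ hA.isHermitian.eigenvalues)
  have hU : star U * U = 1 := Unitary.coe_star_mul_self _
  have hD : D * D = diagonal (RCLike.ofReal ∘ hA.isHermitian.eigenvalues) := by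
    simp only [D, diagonal_mul_diagonal, Function.comp_apply, ← RCLike.ofReal_mul,
      Real.mul_self_sqrt (hA.eigenvalues_nonneg _)]
    rfl
  conv_rhs => rw [hA.isHermitian.spectral_theorem, Unitary.conjStarAlgAut_apply]
  calc U * D * star U * (U * D * star U) = U * D * (star U * U) * D * star U := by
        simp only [Matrix.mul_assoc]
    _ = U * (D * D) * star U := by rw [hU, Matrix.mul_one, Matrix.mul_assoc U D D]
    _ = _ := by rw [hD]

lemma posSemidef_sqrt (hA : A.PosSemidef) : hA.sqrt.PosSemidef := by
  have hD : (diagonal ((↑) ∘ (√·) ∘ hA.isHermitian.eigenvalues) : Matrix n n 𝕜).PosSemidef := by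
    rw [posSemidef_diagonal_iff]
    intro i
    simp [Real.sqrt_nonneg]
  rw [sqrt, Matrix.star_eq_conjTranspose]
  exact hD.mul_mul_conjTranspose_same hA.isHermitian.eigenvectorUnitary.1

lemma isUnit_det_sqrt (hA : A.PosDef) : IsUnit hA.posSemidef.sqrt.det := by
  refine isUnit_of_mul_isUnit_left (y := hA.posSemidef.sqrt.det) ?_
  rw [← det_mul, sqrt_mul_self]
  exact (isUnit_iff_isUnit_det _).1 hA.isUnit

lemma inv_sqrt_mul_self (hA : A.PosDef) : (hA.posSemidef.sqrt)⁻¹ * A = hA.posSemidef.sqrt := by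
  calc (hA.posSemidef.sqrt)⁻¹ * A
      = (hA.posSemidef.sqrt)⁻¹ * (hA.posSemidef.sqrt * hA.posSemidef.sqrt) := by
        rw [sqrt_mul_self]
    _ = hA.posSemidef.sqrt := by
        rw [← Matrix.mul_assoc, nonsing_inv_mul _ (isUnit_det_sqrt hA), Matrix.one_mul]

end Matrix.PosSemidef

lemma Matrix.PosSemidef.transpose_sqrt {n : Type*} [Fintype n] [DecidableEq n]
    {A : Matrix n n ℝ} (hA : A.PosSemidef) : hA.sqrtᵀ = hA.sqrt :=
  isHermitian_iff_isSymm.1 hA.posSemidef_sqrt.isHermitian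

lemma sub_mulVec_add_gain_mulVec {m n R : Type*} [Fintype m] [Fintype n] [DecidableEq m]
    [CommRing R] (G : Matrix m n R) (C : Matrix n n R) (Γ : Matrix m m R)
    (hS : IsUnit (G * C * Gᵀ + Γ).det) (y : m → R) (u₀ : n → R) :
    y - G *ᵥ (u₀ + (C * Gᵀ * (G * C * Gᵀ + Γ)⁻¹) *ᵥ (y - G *ᵥ u₀)) =
      (Γ * (G * C * Gᵀ + Γ)⁻¹) *ᵥ (y - G *ᵥ u₀) := by
  set S := G * C * Gᵀ + Γ
  have hΓS : Γ * S⁻¹ = 1 - G * C * Gᵀ * S⁻¹ := by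
    rw [eq_sub_iff_add_eq, ← Matrix.add_mul, add_comm, mul_nonsing_inv _ hS]
  rw [hΓS, mulVec_add, mulVec_mulVec, sub_mulVec, one_mulVec, ← Matrix.mul_assoc,
    ← Matrix.mul_assoc]
  abel

lemma transpose_inv_mul_mul_inv_mul {n R : Type*} [Fintype n] [DecidableEq n] [CommRing R]
    {B T : Matrix n n R} (hB : Bᵀ = B) (hT : Tᵀ = T) :
    (T⁻¹ * B)ᵀ * (T⁻¹ * B) = B * (T * T)⁻¹ * B := by
  rw [transpose_mul, transpose_nonsing_inv, hB, hT, Matrix.mul_inv_rev]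
  simp only [Matrix.mul_assoc]

open scoped Matrix.Norms.L2Operator in
lemma euclNorm_transpose_mul_self_mulVec_le {k l : ℕ} (A : Matrix (Fin k) (Fin l) ℝ)
    (v : Fin l → ℝ) : euclNorm ((Aᵀ * A) *ᵥ v) ≤ l2OpNorm A ^ 2 * euclNorm v := by
  have hnorm : l2OpNorm (Aᵀ * A) = l2OpNorm A ^ 2 := by
    rw [← conjTranspose_eq_transpose_of_trivial, sq]
    exact l2_opNorm_conjTranspose_mul_self A
  rw [← hnorm]
  exact (Aᵀ * A).l2_opNorm_mulVec ((WithLp.equiv 2 (Fin l → ℝ)).symm v)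

theorem one_step_residual_contraction_general {m n : ℕ} (G : Matrix (Fin m) (Fin n) ℝ)
    (C : Matrix (Fin n) (Fin n) ℝ) (Γ : Matrix (Fin m) (Fin m) ℝ)
    (hΓ : Γ.PosDef) (hGCG : (G * C * Gᵀ + Γ).PosDef)
    (y : Fin m → ℝ) (u₀ : Fin n → ℝ) :
    let u₁ : Fin n → ℝ := u₀ + (C * Gᵀ * (G * C * Gᵀ + Γ)⁻¹) *ᵥ (y - G *ᵥ u₀)
    (hΓ.posSemidef.sqrt)⁻¹ *ᵥ (y - G *ᵥ u₁) =
      hΓ.posSemidef.sqrt *ᵥ (G * C * Gᵀ + Γ)⁻¹ *ᵥ (y - G *ᵥ u₀) ∧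
    euclNorm ((hΓ.posSemidef.sqrt)⁻¹ *ᵥ (y - G *ᵥ u₁)) ≤
      l2OpNorm ((hGCG.posSemidef.sqrt)⁻¹ * hΓ.posSemidef.sqrt) ^ 2 *
        euclNorm ((hΓ.posSemidef.sqrt)⁻¹ *ᵥ (y - G *ᵥ u₀)) := by
  intro u₁
  set B := hΓ.posSemidef.sqrt
  set T := hGCG.posSemidef.sqrt
  set r := y - G *ᵥ u₀
  have hwhitened : B⁻¹ *ᵥ (y - G *ᵥ u₁) = B *ᵥ (G * C * Gᵀ + Γ)⁻¹ *ᵥ r := by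
    rw [sub_mulVec_add_gain_mulVec G C Γ ((isUnit_iff_isUnit_det _).1 hGCG.isUnit),
      mulVec_mulVec, mulVec_mulVec, ← Matrix.mul_assoc, PosSemidef.inv_sqrt_mul_self hΓ]
  refine ⟨hwhitened, ?_⟩
  have hfactor : B *ᵥ (G * C * Gᵀ + Γ)⁻¹ *ᵥ r = ((T⁻¹ * B)ᵀ * (T⁻¹ * B)) *ᵥ (B⁻¹ *ᵥ r) := by
    rw [transpose_inv_mul_mul_inv_mul hΓ.posSemidef.transpose_sqrt
      hGCG.posSemidef.transpose_sqrt, hGCG.posSemidef.sqrt_mul_self, mulVec_mulVec,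
      mulVec_mulVec, Matrix.mul_assoc _ B, mul_nonsing_inv _
      (PosSemidef.isUnit_det_sqrt hΓ), Matrix.mul_one]
  rw [hwhitened, hfactor]
  exact euclNorm_transpose_mul_self_mulVec_le _ _

/-- for `u₁ = u₀ + C Gᵀ (G C Gᵀ + Γ)⁻¹ (y − G u₀)` one has
`Γ^{-1/2}(y − G u₁) = Γ^{1/2}(G C Gᵀ + Γ)⁻¹(y − G u₀)`, hence
`‖Γ^{-1/2}(y − G u₁)‖ ≤ ‖(G C Gᵀ + Γ)^{-1/2} Γ^{1/2}‖² ‖Γ^{-1/2}(y − G u₀)‖`.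
(The hypothesis `hGCG` records that `G C Gᵀ + Γ` is symmetric positive definite, which follows
from positive definiteness of `C` and `Γ`.) -/
theorem one_step_residual_contraction {m n : ℕ} (G : Matrix (Fin m) (Fin n) ℝ)
    (C : Matrix (Fin n) (Fin n) ℝ) (Γ : Matrix (Fin m) (Fin m) ℝ)
    (hC : C.PosDef) (hΓ : Γ.PosDef) (hGCG : (G * C * Gᵀ + Γ).PosDef)
    (y : Fin m → ℝ) (u₀ : Fin n → ℝ) :
    let u₁ : Fin n → ℝ := u₀ + (C * Gᵀ * (G * C * Gᵀ + Γ)⁻¹) *ᵥ (y - G *ᵥ u₀)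
    (hΓ.posSemidef.sqrt)⁻¹ *ᵥ (y - G *ᵥ u₁) =
      hΓ.posSemidef.sqrt *ᵥ (G * C * Gᵀ + Γ)⁻¹ *ᵥ (y - G *ᵥ u₀) ∧
    euclNorm ((hΓ.posSemidef.sqrt)⁻¹ *ᵥ (y - G *ᵥ u₁)) ≤
      l2OpNorm ((hGCG.posSemidef.sqrt)⁻¹ * hΓ.posSemidef.sqrt) ^ 2 *
        euclNorm ((hΓ.posSemidef.sqrt)⁻¹ *ᵥ (y - G *ᵥ u₀)) :=
  one_step_residual_contraction_general G C Γ hΓ hGCG y u₀
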